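/- Let f : 𝔾* → ℝ be a bounded completely multiplicative function on the nonzero Gaussian integers, and suppose the limit L = lim_{N→∞} 𝔼_{1≤m,n≤N} f(m + in) exists. Then the limit lim_{N→∞} 𝔼_{1≤m,n≤N, gcd(m,n)=1} f(m + in) exists and equals (π²/6) · ∏_p (1 − f(p)/p²) · L, where the product runs over all rational primes p. -/

import Mathlib

/-!
Write `S(M)` for the sum of `f(m + in)` over `1 ≤ m, n ≤ M`. Möbius inversion over the common
divisor `d` of `m` and `n`, together with `f(dm + idn) = f(d) f(m + in)`, writes the sum over coprime
pairs in `[1, N]²` as `∑_{d ≤ N} μ(d) f(d) S(⌊N/d⌋)`. Since `S(M) / M² → L` and `|S(M)| ≤ C M²`,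
dominated convergence turns this sum divided by `N²` into `L ∑_d μ(d) f(d) / d²`, which is the
Euler product `L ∏_p (1 - f(p) / p²)`. For `f = 1` this says that the coprime pairs have density
`∏_p (1 - 1/p²) = 1/ζ(2) = 6/π²`, and the theorem is the quotient of the two limits.
-/

open Filter Finset Real ArithmeticFunction
open scoped ArithmeticFunction.Moebius Topology

theorem sum_divisors_moebius (n : ℕ) : ∑ d ∈ n.divisors, μ d = if n = 1 then 1 else 0 := by
  rw [← coe_mul_zeta_apply, moebius_mul_coe_zeta, one_apply]

theorem sum_Icc_filter_dvd {M : Type*} [AddCommMonoid M] (F : ℕ → M) {d : ℕ} (hd : 0 < d)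
    (N : ℕ) : ∑ m ∈ Icc 1 N with d ∣ m, F m = ∑ a ∈ Icc 1 (N / d), F (d * a) := by
  symm
  refine sum_nbij' (d * ·) (· / d) ?_ ?_ ?_ ?_ (fun _ _ => rfl)
  · intro a ha
    simp only [mem_Icc, mem_filter, Nat.le_div_iff_mul_le hd] at ha ⊢
    exact ⟨⟨by nlinarith, by linarith⟩, dvd_mul_right d a⟩
  · intro m hm
    simp only [mem_Icc, mem_filter] at hm ⊢
    obtain ⟨⟨h1, hN⟩, a, rfl⟩ := hm
    rw [Nat.mul_div_cancel_left a hd]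
    exact ⟨Nat.pos_of_mul_pos_left h1, (Nat.le_div_iff_mul_le hd).2 (mul_comm a d ▸ hN)⟩
  · intro a _; simp [hd.ne']
  · intro m hm
    simp only [mem_filter] at hm
    exact Nat.mul_div_cancel' hm.2

theorem sum_filter_coprime_Icc_sq {M : Type*} [AddCommGroup M] (F : ℕ → ℕ → M) (N : ℕ) :
    ∑ p ∈ Icc 1 N ×ˢ Icc 1 N with p.1.gcd p.2 = 1, F p.1 p.2 =
      ∑ d ∈ Icc 1 N, μ d • ∑ a ∈ Icc 1 (N / d), ∑ b ∈ Icc 1 (N / d), F (d * a) (d * b) := by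
  have hcoprime : ∀ p ∈ Icc 1 N ×ˢ Icc 1 N, (if p.1.gcd p.2 = 1 then F p.1 p.2 else 0) =
      ∑ d ∈ Icc 1 N, if d ∣ p.1 ∧ d ∣ p.2 then μ d • F p.1 p.2 else 0 := by
    rintro ⟨m, n⟩ hp
    simp only [mem_product, mem_Icc] at hp
    have hg : 0 < m.gcd n := Nat.gcd_pos_of_pos_left n hp.1.1
    have hgN : m.gcd n ≤ N := (Nat.le_of_dvd hp.1.1 (Nat.gcd_dvd_left m n)).trans hp.1.2
    have hdiv : {d ∈ Icc 1 N | d ∣ m ∧ d ∣ n} = (m.gcd n).divisors := by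
      ext d
      simp only [mem_filter, mem_Icc, Nat.mem_divisors, ← Nat.dvd_gcd_iff]
      constructor
      · rintro ⟨-, hd⟩; exact ⟨hd, hg.ne'⟩
      · rintro ⟨hd, -⟩; exact ⟨⟨Nat.pos_of_dvd_of_pos hd hg, (Nat.le_of_dvd hg hd).trans hgN⟩, hd⟩
    rw [← sum_filter, hdiv, ← sum_smul, sum_divisors_moebius]
    split_ifs <;> simp
  rw [sum_filter, sum_congr rfl hcoprime, sum_comm]
  refine sum_congr rfl fun d hd => ?_
  have hd : 0 < d := (mem_Icc.1 hd).1
  simp_rw [← sum_filter, filter_product, sum_product, ← smul_sum, sum_Icc_filter_dvd _ hd]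

theorem tendsto_natCast_div_div_self (d : ℕ) :
    Tendsto (fun N : ℕ => ((N / d : ℕ) : ℝ) / N) atTop (𝓝 (d : ℝ)⁻¹) := by
  refine ((tendsto_nat_floor_mul_div_atTop (inv_nonneg.2 d.cast_nonneg)).comp
    tendsto_natCast_atTop_atTop).congr fun N => ?_
  simp only [Function.comp_apply, inv_mul_eq_div, Nat.floor_div_eq_div]

theorem tendsto_div_sq_comp_div {S : ℕ → ℝ} {L : ℝ}
    (hS : Tendsto (fun M : ℕ => S M / (M : ℝ) ^ 2) atTop (𝓝 L)) {d : ℕ} (hd : d ≠ 0) :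
    Tendsto (fun N : ℕ => S (N / d) / (N : ℝ) ^ 2) atTop (𝓝 (L / (d : ℝ) ^ 2)) := by
  have h := (hS.comp (Nat.tendsto_div_const_atTop hd)).mul
    ((tendsto_natCast_div_div_self d).pow 2)
  rw [inv_pow, ← div_eq_mul_inv] at h
  refine h.congr' ?_
  filter_upwards [eventually_ge_atTop d] with N hN
  have : ((N / d : ℕ) : ℝ) ≠ 0 := Nat.cast_ne_zero.2 (Nat.div_pos hN (Nat.pos_of_ne_zero hd)).ne'
  simp only [Function.comp_apply]
  field_simp

theorem tendsto_sum_Icc_mul_comp_div_div_sq {a S : ℕ → ℝ} {A B L : ℝ} (ha : ∀ d, |a d| ≤ A)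
    (hS : ∀ M : ℕ, |S M| ≤ B * (M : ℝ) ^ 2)
    (hSL : Tendsto (fun M : ℕ => S M / (M : ℝ) ^ 2) atTop (𝓝 L)) :
    Tendsto (fun N : ℕ => (∑ d ∈ Icc 1 N, a d * S (N / d)) / (N : ℝ) ^ 2) atTop
      (𝓝 ((∑' d : ℕ, a d / (d : ℝ) ^ 2) * L)) := by
  have hS0 : S 0 = 0 := by simpa using hS 0
  have hA : 0 ≤ A := (abs_nonneg _).trans (ha 0)
  have hB : 0 ≤ B := by simpa using (abs_nonneg _).trans (hS 1)
  set u : ℕ → ℕ → ℝ := fun N d => a d * S (N / d) / (N : ℝ) ^ 2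
  -- The terms `d = 0` and `d > N` vanish since `N / d = 0` there and `S 0 = 0`; on the limit
  -- side, `a 0 / 0 ^ 2 = 0`.
  have hu : ∀ N, (∑ d ∈ Icc 1 N, a d * S (N / d)) / (N : ℝ) ^ 2 = ∑' d, u N d := by
    intro N
    rw [sum_div, tsum_eq_sum fun d hd => ?_]
    rw [mem_Icc, not_and_or, not_le, Nat.lt_one_iff, not_le] at hd
    rcases hd with rfl | hd <;> simp [u, Nat.div_eq_of_lt, *]
  have hlim : ∀ d, Tendsto (fun N => u N d) atTop (𝓝 (a d / (d : ℝ) ^ 2 * L)) := by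
    intro d
    rcases eq_or_ne d 0 with rfl | hd
    · simp [u, hS0]
    · convert (tendsto_div_sq_comp_div hSL hd).const_mul (a d) using 2
      · exact mul_div_assoc _ _ _
      · ring
  have hbound : ∀ N d, ‖u N d‖ ≤ A * B * (1 / (d : ℝ) ^ 2) := by
    intro N d
    rcases Nat.eq_zero_or_pos N with rfl | hN
    · simp [u, hS0]; positivity
    calc ‖u N d‖ = |a d| * |S (N / d)| / (N : ℝ) ^ 2 := by
          simp [u]
      _ ≤ A * (B * ((N : ℝ) / d) ^ 2) / (N : ℝ) ^ 2 := by
          gcongr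
          · exact ha d
          · exact (hS _).trans (by gcongr; exact Nat.cast_div_le)
      _ = A * B * (1 / (d : ℝ) ^ 2) := by field_simp
  have hsum : Summable fun d : ℕ => A * B * (1 / (d : ℝ) ^ 2) :=
    (Real.summable_one_div_nat_pow.2 one_lt_two).mul_left _
  simpa only [hu, tsum_mul_right] using
    tendsto_tsum_of_dominated_convergence hsum hlim (.of_forall hbound)

theorem norm_moebius_mul_le {R : Type*} [NormedRing R] [NormOneClass R] (n : ℕ) (x : R) :
    ‖(μ n : R) * x‖ ≤ ‖x‖ := by
  by_cases h : μ n = 0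
  · simp [h]
  · rcases moebius_ne_zero_iff_eq_or.1 h with h | h <;> simp [h]

theorem tsum_moebius_mul_eq_tprod {R : Type*} [NormedCommRing R] [CompleteSpace R]
    [NormOneClass R] {h : ℕ → R} (h1 : h 1 = 1)
    (hmul : ∀ {m n}, m.Coprime n → h (m * n) = h m * h n) (hsum : Summable (‖h ·‖)) :
    ∑' n, (μ n : R) * h n = ∏' p : Nat.Primes, (1 - h p) := by
  have hμh : ∀ {m n}, m.Coprime n → (μ (m * n) : R) * h (m * n) = μ m * h m * (μ n * h n) := by
    intro m n hmn
    rw [isMultiplicative_moebius.map_mul_of_coprime hmn, hmul hmn]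
    push_cast
    ring
  rw [← EulerProduct.eulerProduct_tprod (by simp [h1]) hμh
    (hsum.of_nonneg_of_le (fun _ => norm_nonneg _) fun n => norm_moebius_mul_le n (h n))
    (by simp)]
  refine tprod_congr fun p => ?_
  rw [tsum_eq_sum (s := {0, 1}) fun e he => ?_, sum_pair zero_ne_one]
  · simp [moebius_apply_prime p.prop, h1, sub_eq_add_neg]
  · simp only [mem_insert, mem_singleton, not_or] at he
    simp [moebius_apply_prime_pow p.prop he.1, he.2]

theorem tprod_one_sub_one_div_sq : ∏' p : Nat.Primes, (1 - 1 / ((p : ℕ) : ℝ) ^ 2) = 6 / π ^ 2 := by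
  let F : ℕ →*₀ ℝ :=
    { toFun := fun n => 1 / (n : ℝ) ^ 2
      map_zero' := by simp
      map_one' := by simp
      map_mul' := fun m n => by push_cast; rw [mul_pow, one_div_mul_one_div] }
  have hsum : Summable (‖F ·‖) := by simp [F]
  have h := EulerProduct.eulerProduct_completely_multiplicative_hasProd hsum
  simp only [F, MonoidWithZeroHom.coe_mk, ZeroHom.coe_mk, hasSum_zeta_two.tsum_eq] at h
  simpa only [inv_inv, inv_div] using (h.inv₀ (by positivity)).tprod_eq

theorem Zsqrtd.natCast_mul_mk {d : ℤ} (k a b : ℕ) :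
    (k : ℤ√d) * ⟨a, b⟩ = ⟨(k * a : ℕ), (k * b : ℕ)⟩ := by
  ext <;> simp

theorem Zsqrtd.mk_ne_zero {d x : ℤ} (hx : x ≠ 0) (y : ℤ) : (⟨x, y⟩ : ℤ√d) ≠ 0 :=
  fun h => hx (congrArg Zsqrtd.re h)

section GaussianMultiplicative

variable {f : GaussianInt → ℝ}

theorem sum_coprime_Icc_sq_eq_sum_moebius_mul
    (hfmul : ∀ α β : GaussianInt, α ≠ 0 → β ≠ 0 → f (α * β) = f α * f β) (N : ℕ) :
    ∑ p ∈ Icc 1 N ×ˢ Icc 1 N with p.1.gcd p.2 = 1, f ⟨p.1, p.2⟩ =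
      ∑ d ∈ Icc 1 N, μ d * f d * ∑ a ∈ Icc 1 (N / d), ∑ b ∈ Icc 1 (N / d), f ⟨a, b⟩ := by
  rw [sum_filter_coprime_Icc_sq (fun m n => f ⟨m, n⟩)]
  refine sum_congr rfl fun d hd => ?_
  rw [zsmul_eq_mul, mul_assoc]
  congr 1
  simp only [mul_sum]
  refine sum_congr rfl fun a ha => sum_congr rfl fun b _ => ?_
  have hd : (d : GaussianInt) ≠ 0 := Nat.cast_ne_zero.2 (by simp at hd; omega)
  have hab : (⟨a, b⟩ : GaussianInt) ≠ 0 := Zsqrtd.mk_ne_zero (by simp at ha; omega) _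
  rw [← hfmul _ _ hd hab, Zsqrtd.natCast_mul_mk]

theorem tsum_moebius_mul_div_sq_eq_tprod {C : ℝ}
    (hfb : ∀ α : GaussianInt, α ≠ 0 → |f α| ≤ C) (hf1 : f 1 = 1)
    (hfmul : ∀ α β : GaussianInt, α ≠ 0 → β ≠ 0 → f (α * β) = f α * f β) :
    ∑' d : ℕ, μ d * f d / (d : ℝ) ^ 2 =
      ∏' p : Nat.Primes, (1 - f (p : ℕ) / ((p : ℕ) : ℝ) ^ 2) := by
  -- `f 0` is arbitrary, but `f 0 / 0 ^ 2 = 0`: the weight `d ↦ f d / d ^ 2` is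
  -- completely multiplicative on all of `ℕ`.
  have hmul : ∀ m n : ℕ, f ((m * n : ℕ) : GaussianInt) / ((m * n : ℕ) : ℝ) ^ 2 =
      f m / (m : ℝ) ^ 2 * (f n / (n : ℝ) ^ 2) := by
    intro m n
    rcases eq_or_ne m 0 with rfl | hm; · simp
    rcases eq_or_ne n 0 with rfl | hn; · simp
    rw [Nat.cast_mul, hfmul _ _ (Nat.cast_ne_zero.2 hm) (Nat.cast_ne_zero.2 hn)]
    push_cast
    ring
  have hsum : Summable fun d : ℕ => ‖f d / (d : ℝ) ^ 2‖ := by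
    refine (Real.summable_one_div_nat_pow.2 one_lt_two |>.mul_left C).of_nonneg_of_le
      (fun _ => norm_nonneg _) fun d => ?_
    rcases eq_or_ne d 0 with rfl | hd
    · simp
    · rw [norm_div, norm_pow, Real.norm_natCast, Real.norm_eq_abs, mul_one_div]
      gcongr
      exact hfb _ (Nat.cast_ne_zero.2 hd)
  simp_rw [mul_div_assoc]
  exact tsum_moebius_mul_eq_tprod (by simpa using hf1) (fun _ => hmul _ _) hsum

theorem tendsto_sum_coprime_Icc_div_sq {C L : ℝ}
    (hfb : ∀ α : GaussianInt, α ≠ 0 → |f α| ≤ C) (hf1 : f 1 = 1)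
    (hfmul : ∀ α β : GaussianInt, α ≠ 0 → β ≠ 0 → f (α * β) = f α * f β)
    (hL : Tendsto (fun N : ℕ =>
      (∑ m ∈ Icc 1 N, ∑ n ∈ Icc 1 N, f ⟨m, n⟩) / (N : ℝ) ^ 2) atTop (𝓝 L)) :
    Tendsto (fun N : ℕ =>
      (∑ p ∈ Icc 1 N ×ˢ Icc 1 N with p.1.gcd p.2 = 1, f ⟨p.1, p.2⟩) / (N : ℝ) ^ 2) atTop
      (𝓝 ((∏' p : Nat.Primes, (1 - f (p : ℕ) / ((p : ℕ) : ℝ) ^ 2)) * L)) := by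
  have hS : ∀ M : ℕ, |∑ m ∈ Icc 1 M, ∑ n ∈ Icc 1 M, f ⟨m, n⟩| ≤ C * (M : ℝ) ^ 2 := by
    intro M
    calc _ ≤ ∑ m ∈ Icc 1 M, ∑ n ∈ Icc 1 M, C := by
          refine (abs_sum_le_sum_abs _ _).trans (sum_le_sum fun m hm => ?_)
          refine (abs_sum_le_sum_abs _ _).trans (sum_le_sum fun n _ => ?_)
          exact hfb _ (Zsqrtd.mk_ne_zero (by simp at hm; omega) _)
      _ = C * (M : ℝ) ^ 2 := by simp; ring
  have hμf : ∀ d : ℕ, |μ d * f d| ≤ C := by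
    intro d
    rcases eq_or_ne d 0 with rfl | hd
    · simpa using (abs_nonneg _).trans (hfb 1 one_ne_zero)
    · simpa [abs_mul] using (norm_moebius_mul_le d (f d)).trans (hfb _ (Nat.cast_ne_zero.2 hd))
  simpa only [sum_coprime_Icc_sq_eq_sum_moebius_mul hfmul,
    tsum_moebius_mul_div_sq_eq_tprod hfb hf1 hfmul] using
    tendsto_sum_Icc_mul_comp_div_div_sq hμf hS hL

end GaussianMultiplicative

theorem tendsto_card_coprime_Icc_div_sq :
    Tendsto (fun N : ℕ => (#{p ∈ Icc 1 N ×ˢ Icc 1 N | p.1.gcd p.2 = 1} : ℝ) / (N : ℝ) ^ 2)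
      atTop (𝓝 (6 / π ^ 2)) := by
  have hsq : Tendsto (fun N : ℕ => (∑ m ∈ Icc 1 N, ∑ n ∈ Icc 1 N, (1 : ℝ)) / (N : ℝ) ^ 2)
      atTop (𝓝 1) :=
    tendsto_const_nhds.congr' <| (eventually_ne_atTop 0).mono fun N hN => by simp; field_simp
  have h := tendsto_sum_coprime_Icc_div_sq (f := fun _ => 1) (C := 1) (by simp) rfl (by simp) hsq
  simpa only [tprod_one_sub_one_div_sq, mul_one, cast_card] using h

theorem stmt6 (f : GaussianInt → ℝ) (C : ℝ)
    (hfb : ∀ α : GaussianInt, α ≠ 0 → |f α| ≤ C)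
    (hf1 : f 1 = 1)
    (hfmul : ∀ α β : GaussianInt, α ≠ 0 → β ≠ 0 → f (α * β) = f α * f β)
    (L : ℝ)
    (hL : Tendsto (fun N : ℕ =>
        (∑ m ∈ Finset.Icc 1 N, ∑ n ∈ Finset.Icc 1 N,
            f ⟨(m : ℤ), (n : ℤ)⟩) / (N : ℝ) ^ 2)
      atTop (nhds L)) :
    Tendsto (fun N : ℕ =>
        (∑ p ∈ (Finset.Icc 1 N ×ˢ Finset.Icc 1 N).filter (fun p => Nat.gcd p.1 p.2 = 1),
            f ⟨(p.1 : ℤ), (p.2 : ℤ)⟩) /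
          (((Finset.Icc 1 N ×ˢ Finset.Icc 1 N).filter
              (fun p => Nat.gcd p.1 p.2 = 1)).card : ℝ))
      atTop
      (nhds ((Real.pi ^ 2 / 6) *
        (∏' p : {p : ℕ // p.Prime}, (1 - f ((p.1 : ℕ) : GaussianInt) / (p.1 : ℝ) ^ 2)) * L)) := by
  have hlim := (tendsto_sum_coprime_Icc_div_sq hfb hf1 hfmul hL).div
    tendsto_card_coprime_Icc_div_sq (by positivity)
  rw [show ∀ P : ℝ, P * L / (6 / π ^ 2) = π ^ 2 / 6 * P * L from fun P => by field_simp] at hlim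
  refine hlim.congr' ((eventually_ne_atTop 0).mono fun N hN => ?_)
  exact div_div_div_cancel_right₀ (by positivity) _ _
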